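/- Taking the negative divergence of the momentum residual −ρ ∇·(∂u/∂t) + ∇·[∇·(2μ∇ˢu)] − ∇·[2∇ˢu ∇μ] + [∇×(∇×u)]·∇μ and using the identities Δu = ∇(∇·u) − ∇×(∇×u) and ∇·(μ∇×(∇×u)) = [∇×(∇×u)]·∇μ, the quantity Φ := ∇·u satisfies the heat-type equation ∂Φ/∂t − ∇·[(2μ/ρ) ∇Φ] = 0, for sufficiently smooth u, μ with ρ a positive constant. -/

import Mathlib

open scoped BigOperators
noncomputable section

/-- Partial derivative in direction `i`. -/
def pd (i : Fin 3) (f : (Fin 3 → ℝ) → ℝ) (x : Fin 3 → ℝ) : ℝ :=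
  fderiv ℝ f x (Pi.single i 1)

/-- Divergence of a vector field on ℝ³. -/
def div3 (u : (Fin 3 → ℝ) → Fin 3 → ℝ) (x : Fin 3 → ℝ) : ℝ :=
  ∑ i, pd i (fun y => u y i) x

/-- Gradient of a scalar field on ℝ³. -/
def grad3 (f : (Fin 3 → ℝ) → ℝ) (x : Fin 3 → ℝ) : Fin 3 → ℝ :=
  fun i => pd i f x

/-- Curl of a vector field on ℝ³. -/
def curl3 (u : (Fin 3 → ℝ) → Fin 3 → ℝ) (x : Fin 3 → ℝ) : Fin 3 → ℝ :=
  ![pd 1 (fun y => u y 2) x - pd 2 (fun y => u y 1) x,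
    pd 2 (fun y => u y 0) x - pd 0 (fun y => u y 2) x,
    pd 0 (fun y => u y 1) x - pd 1 (fun y => u y 0) x]

/-- Componentwise (vector) Laplacian on ℝ³. -/
def lap3 (u : (Fin 3 → ℝ) → Fin 3 → ℝ) (x : Fin 3 → ℝ) : Fin 3 → ℝ :=
  fun j => ∑ i, pd i (fun y => pd i (fun z => u z j) y) x


/-- Velocity gradient matrix, (∇u)_{ij} = ∂u_i/∂x_j. -/
def gradm (u : (Fin 3 → ℝ) → Fin 3 → ℝ) (x : Fin 3 → ℝ) : Matrix (Fin 3) (Fin 3) ℝ :=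
  Matrix.of fun i j => pd j (fun y => u y i) x

/-- Symmetric gradient ∇ˢu = (∇u + (∇u)ᵀ)/2. -/
def symgrad (u : (Fin 3 → ℝ) → Fin 3 → ℝ) (x : Fin 3 → ℝ) : Matrix (Fin 3) (Fin 3) ℝ :=
  (1/2 : ℝ) • (gradm u x + (gradm u x).transpose)

/-- Row-wise divergence of a matrix field. -/
def divM (S : (Fin 3 → ℝ) → Matrix (Fin 3) (Fin 3) ℝ) (x : Fin 3 → ℝ) : Fin 3 → ℝ :=
  fun i => ∑ j, pd j (fun y => S y i j) x

namespace HeatAux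

variable {E : Type*} [NormedAddCommGroup E] [NormedSpace ℝ E]

def dd (v : E) (F : E → ℝ) : E → ℝ := fun q => fderiv ℝ F q v

theorem contDiffOn_dd {U : Set E} (hU : IsOpen U) {F : E → ℝ}
    (hF : ContDiffOn ℝ (⊤ : ℕ∞) F U) (v : E) : ContDiffOn ℝ (⊤ : ℕ∞) (dd v F) U := by
  have h1 : ContDiffOn ℝ (⊤ : ℕ∞) (fderiv ℝ F) U := hF.fderiv_of_isOpen hU (by simp)
  exact h1.clm_apply contDiffOn_const

theorem diffAt {U : Set E} (hU : IsOpen U) {F : E → ℝ}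
    (hF : ContDiffOn ℝ (⊤ : ℕ∞) F U) {q : E} (hq : q ∈ U) : DifferentiableAt ℝ F q :=
  (hF.contDiffAt (hU.mem_nhds hq)).differentiableAt (by simp)

theorem dd_congr_on {U : Set E} (hU : IsOpen U) {f g : E → ℝ}
    (h : ∀ p ∈ U, f p = g p) {q : E} (hq : q ∈ U) (v : E) :
    dd v f q = dd v g q := by
  have hev : f =ᶠ[nhds q] g := by
    filter_upwards [hU.mem_nhds hq] with p hp using h p hp
  unfold dd
  rw [hev.fderiv_eq]

theorem dd_comm {U : Set E} (hU : IsOpen U) {F : E → ℝ}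
    (hF : ContDiffOn ℝ (⊤ : ℕ∞) F U) {q : E} (hq : q ∈ U) (v w : E) :
    dd w (dd v F) q = dd v (dd w F) q := by
  have hca : ContDiffAt ℝ (⊤ : ℕ∞) F q := hF.contDiffAt (hU.mem_nhds hq)
  have hsymm : IsSymmSndFDerivAt ℝ F q := hca.isSymmSndFDerivAt (by
    rw [minSmoothness_of_isRCLikeNormedField]; exact WithTop.coe_le_coe.mpr (le_top : (2 : ℕ∞) ≤ ⊤))
  have hd : DifferentiableAt ℝ (fderiv ℝ F) q := by
    have h1 : ContDiffOn ℝ (⊤ : ℕ∞) (fderiv ℝ F) U := hF.fderiv_of_isOpen hU (by simp)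
    exact (h1.contDiffAt (hU.mem_nhds hq)).differentiableAt (by simp)
  have key : ∀ a b : E, dd b (dd a F) q = fderiv ℝ (fderiv ℝ F) q b a := by
    intro a b
    have : dd a F = fun p => (fderiv ℝ F p) a := rfl
    rw [this]
    show fderiv ℝ (fun p => (fderiv ℝ F p) ((fun _ : E => a) p)) q b = _
    rw [fderiv_clm_apply hd (differentiableAt_const a)]
    simp
  rw [key v w, key w v, hsymm w v]

theorem dd_mul {A B : E → ℝ} {q : E} (hA : DifferentiableAt ℝ A q)
    (hB : DifferentiableAt ℝ B q) (v : E) :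
    dd v (fun p => A p * B p) q = dd v A q * B q + A q * dd v B q := by
  unfold dd
  rw [fderiv_fun_mul hA hB]
  simp only [ContinuousLinearMap.add_apply, ContinuousLinearMap.smul_apply, smul_eq_mul]
  ring

theorem dd_add {A B : E → ℝ} {q : E} (hA : DifferentiableAt ℝ A q)
    (hB : DifferentiableAt ℝ B q) (v : E) :
    dd v (fun p => A p + B p) q = dd v A q + dd v B q := by
  unfold dd
  rw [fderiv_fun_add hA hB]
  simp

theorem dd_sub {A B : E → ℝ} {q : E} (hA : DifferentiableAt ℝ A q)
    (hB : DifferentiableAt ℝ B q) (v : E) :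
    dd v (fun p => A p - B p) q = dd v A q - dd v B q := by
  unfold dd
  rw [fderiv_fun_sub hA hB]
  simp

theorem dd_const_mul {A : E → ℝ} {q : E} (hA : DifferentiableAt ℝ A q) (c : ℝ) (v : E) :
    dd v (fun p => c * A p) q = c * dd v A q := by
  unfold dd
  rw [fderiv_const_mul hA c]
  simp

theorem dd_sum {ι : Type*} (s : Finset ι) {A : ι → E → ℝ} {q : E}
    (hA : ∀ i ∈ s, DifferentiableAt ℝ (A i) q) (v : E) :
    dd v (fun p => ∑ i ∈ s, A i p) q = ∑ i ∈ s, dd v (A i) q := by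
  unfold dd
  rw [fderiv_fun_sum hA]
  simp

/-- Second-order product rule. -/
theorem dd_dd_mul {U : Set E} (hU : IsOpen U) {A B : E → ℝ}
    (hA : ContDiffOn ℝ (⊤ : ℕ∞) A U) (hB : ContDiffOn ℝ (⊤ : ℕ∞) B U) {q : E} (hq : q ∈ U) (v w : E) :
    dd w (dd v (fun p => A p * B p)) q
      = dd w (dd v A) q * B q + dd v A q * dd w B q
        + dd w A q * dd v B q + A q * dd w (dd v B) q := by
  have h1 : ∀ p ∈ U, dd v (fun r => A r * B r) p = dd v A p * B p + A p * dd v B p := by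
    intro p hp
    exact dd_mul (diffAt hU hA hp) (diffAt hU hB hp) v
  rw [dd_congr_on hU h1 hq w]
  have hdA := diffAt hU (contDiffOn_dd hU hA v) hq
  have hdB := diffAt hU (contDiffOn_dd hU hB v) hq
  have hA0 := diffAt hU hA hq
  have hB0 := diffAt hU hB hq
  rw [dd_add (hdA.fun_mul hB0) (hA0.fun_mul hdB) w, dd_mul hdA hB0 w, dd_mul hA0 hdB w]
  ring

theorem dd_dd_add {U : Set E} (hU : IsOpen U) {A B : E → ℝ}
    (hA : ContDiffOn ℝ (⊤ : ℕ∞) A U) (hB : ContDiffOn ℝ (⊤ : ℕ∞) B U) {q : E} (hq : q ∈ U) (v w : E) :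
    dd w (dd v (fun p => A p + B p)) q = dd w (dd v A) q + dd w (dd v B) q := by
  have h1 : ∀ p ∈ U, dd v (fun r => A r + B r) p = dd v A p + dd v B p := by
    intro p hp
    exact dd_add (diffAt hU hA hp) (diffAt hU hB hp) v
  rw [dd_congr_on hU h1 hq w]
  exact dd_add (diffAt hU (contDiffOn_dd hU hA v) hq) (diffAt hU (contDiffOn_dd hU hB v) hq) w

abbrev EE := ℝ × (Fin 3 → ℝ)

def ee (i : Fin 3) : EE := (0, Pi.single i 1)
def tau : EE := (1, 0)

theorem pd_slice {F : EE → ℝ} {t : ℝ} {x : Fin 3 → ℝ}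
    (hF : DifferentiableAt ℝ F (t, x)) (i : Fin 3) :
    pd i (fun y => F (t, y)) x = dd (ee i) F (t, x) := by
  have h1 : HasFDerivAt (fun y : Fin 3 → ℝ => (t, y))
      (ContinuousLinearMap.inr ℝ ℝ (Fin 3 → ℝ)) x := hasFDerivAt_prodMk_right t x
  have h2 := hF.hasFDerivAt.comp x h1
  have h2' : HasFDerivAt (fun y => F (t, y))
      ((fderiv ℝ F (t, x)).comp (ContinuousLinearMap.inr ℝ ℝ (Fin 3 → ℝ))) x := h2
  have h3 : pd i (fun y => F (t, y)) x
      = ((fderiv ℝ F (t, x)).comp (ContinuousLinearMap.inr ℝ ℝ (Fin 3 → ℝ)))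
          (Pi.single i 1) := by
    rw [pd, h2'.fderiv]
  rw [h3]
  rfl

theorem deriv_slice {F : EE → ℝ} {t : ℝ} {x : Fin 3 → ℝ}
    (hF : DifferentiableAt ℝ F (t, x)) :
    deriv (fun s => F (s, x)) t = dd tau F (t, x) := by
  have h1 : HasFDerivAt (fun s : ℝ => (s, x))
      (ContinuousLinearMap.inl ℝ ℝ (Fin 3 → ℝ)) t := hasFDerivAt_prodMk_left t x
  have h2 := hF.hasFDerivAt.comp t h1
  have h2' : HasFDerivAt (fun s => F (s, x))
      ((fderiv ℝ F (t, x)).comp (ContinuousLinearMap.inl ℝ ℝ (Fin 3 → ℝ))) t := h2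
  have h3 : deriv (fun s => F (s, x)) t
      = ((fderiv ℝ F (t, x)).comp (ContinuousLinearMap.inl ℝ ℝ (Fin 3 → ℝ))) 1 := by
    rw [← fderiv_apply_one_eq_deriv, h2'.fderiv]
  rw [h3]
  rfl

theorem pd_slice_on {U : Set EE} (hU : IsOpen U) {F : EE → ℝ}
    (hF : ContDiffOn ℝ (⊤ : ℕ∞) F U) {t : ℝ} {x : Fin 3 → ℝ} (hq : (t, x) ∈ U)
    {g : (Fin 3 → ℝ) → ℝ} (hg : ∀ y, (t, y) ∈ U → g y = F (t, y)) (i : Fin 3) :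
    pd i g x = dd (ee i) F (t, x) := by
  have hop : IsOpen {y : Fin 3 → ℝ | (t, y) ∈ U} :=
    hU.preimage (continuous_const.prodMk continuous_id)
  have hev : g =ᶠ[nhds x] fun y => F (t, y) := by
    filter_upwards [hop.mem_nhds hq] with y hy using hg y hy
  have h1 : pd i g x = pd i (fun y => F (t, y)) x := by
    unfold pd
    rw [hev.fderiv_eq]
  rw [h1]
  exact pd_slice (diffAt hU hF hq) i

theorem diffAt_slice_t {F : EE → ℝ} {t : ℝ} {x : Fin 3 → ℝ}
    (hF : DifferentiableAt ℝ F (t, x)) :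
    DifferentiableAt ℝ (fun s => F (s, x)) t :=
  hF.comp t (hasFDerivAt_prodMk_left t x).differentiableAt

def Mf (μ : ℝ → (Fin 3 → ℝ) → ℝ) : EE → ℝ := fun p => μ p.1 p.2
def Vf (u : ℝ → (Fin 3 → ℝ) → Fin 3 → ℝ) (j : Fin 3) : EE → ℝ := fun p => u p.1 p.2 j
def aa (u : ℝ → (Fin 3 → ℝ) → Fin 3 → ℝ) (i j : Fin 3) : EE → ℝ := dd (ee j) (Vf u i)

end HeatAux

open HeatAux

/-- The divergence Φ = ∇·u satisfies a heat-type equation ∂Φ/∂t = ∇·((2μ/ρ)∇Φ)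
whenever the divergence of the momentum residual vanishes. -/
theorem divergence_satisfies_heat_equation
    (Ω : Set (Fin 3 → ℝ)) (hΩ : IsOpen Ω) (T ρ : ℝ) (hT : 0 < T) (hρ : 0 < ρ)
    (μ : ℝ → (Fin 3 → ℝ) → ℝ) (u : ℝ → (Fin 3 → ℝ) → Fin 3 → ℝ)
    (hμ : ContDiffOn ℝ (⊤ : ℕ∞) (fun q : ℝ × (Fin 3 → ℝ) => μ q.1 q.2) (Set.Ioo 0 T ×ˢ Ω))
    (hu : ContDiffOn ℝ (⊤ : ℕ∞) (fun q : ℝ × (Fin 3 → ℝ) => u q.1 q.2) (Set.Ioo 0 T ×ˢ Ω))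
    (hres : ∀ t ∈ Set.Ioo 0 T, ∀ x ∈ Ω,
      -ρ * div3 (fun y i => deriv (fun s => u s y i) t) x
        + div3 (fun y => divM (fun z => (2 * μ t z) • symgrad (u t) z) y) x
        - div3 (fun y => (2 : ℝ) • Matrix.mulVec (symgrad (u t) y) (grad3 (μ t) y)) x
        + (∑ i, curl3 (curl3 (u t)) x i * grad3 (μ t) x i) = 0) :
    ∀ t ∈ Set.Ioo 0 T, ∀ x ∈ Ω,
      deriv (fun s => div3 (u s) x) t
        = div3 (fun y => (2 * μ t y / ρ) • grad3 (fun z => div3 (u t) z) y) x := by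
  intro t ht x hx
  have hUopen : IsOpen (Set.Ioo 0 T ×ˢ Ω) := isOpen_Ioo.prod hΩ
  have hqU : ((t, x) : EE) ∈ Set.Ioo 0 T ×ˢ Ω := Set.mk_mem_prod ht hx
  have hMf : ContDiffOn ℝ (⊤ : ℕ∞) (Mf μ) (Set.Ioo 0 T ×ˢ Ω) := hμ
  have hVf : ∀ j, ContDiffOn ℝ (⊤ : ℕ∞) (Vf u j) (Set.Ioo 0 T ×ˢ Ω) := by
    intro j
    have hproj : ContDiff ℝ (⊤ : ℕ∞) (fun v : Fin 3 → ℝ => v j) :=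
      (ContinuousLinearMap.proj j : (Fin 3 → ℝ) →L[ℝ] ℝ).contDiff
    exact hproj.comp_contDiffOn hu
  have haa : ∀ i j, ContDiffOn ℝ (⊤ : ℕ∞) (aa u i j) (Set.Ioo 0 T ×ˢ Ω) :=
    fun i j => contDiffOn_dd hUopen (hVf i) _
  -- divergence as a function on spacetime
  have hdiv : ∀ s y, ((s, y) : EE) ∈ Set.Ioo 0 T ×ˢ Ω →
      div3 (u s) y = ∑ i, aa u i i (s, y) := by
    intro s y hsy
    unfold div3
    exact Finset.sum_congr rfl fun i _ => pd_slice (diffAt hUopen (hVf i) hsy) i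
  -- goal LHS
  have hGL : deriv (fun s => div3 (u s) x) t = ∑ i, dd tau (aa u i i) (t, x) := by
    have hop : IsOpen {s : ℝ | ((s, x) : EE) ∈ Set.Ioo 0 T ×ˢ Ω} :=
      hUopen.preimage (continuous_id.prodMk continuous_const)
    have hev : (fun s => div3 (u s) x) =ᶠ[nhds t] fun s => ∑ i, aa u i i (s, x) := by
      filter_upwards [hop.mem_nhds hqU] with s hs using hdiv s x hs
    rw [hev.deriv_eq]
    rw [deriv_fun_sum (fun i _ => diffAt_slice_t (diffAt hUopen (haa i i) hqU))]
    exact Finset.sum_congr rfl fun i _ => deriv_slice (diffAt hUopen (haa i i) hqU)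
  -- term 1
  have hT1 : div3 (fun y i => deriv (fun s => u s y i) t) x
      = ∑ i, dd tau (aa u i i) (t, x) := by
    unfold div3
    refine Finset.sum_congr rfl fun i _ => ?_
    have hg : ∀ y, ((t, y) : EE) ∈ Set.Ioo 0 T ×ˢ Ω →
        deriv (fun s => u s y i) t = dd tau (Vf u i) (t, y) :=
      fun y hy => deriv_slice (diffAt hUopen (hVf i) hy)
    have h1 : pd i (fun y => deriv (fun s => u s y i) t) x
        = dd (ee i) (dd tau (Vf u i)) (t, x) :=
      pd_slice_on hUopen (contDiffOn_dd hUopen (hVf i) tau) hqU hg i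
    rw [h1]
    exact dd_comm hUopen (hVf i) hqU tau (ee i)
  -- term 2
  have hS2 : ∀ (i j : Fin 3) (z : Fin 3 → ℝ), ((t, z) : EE) ∈ Set.Ioo 0 T ×ˢ Ω →
      ((2 * μ t z) • symgrad (u t) z) i j
        = Mf μ (t, z) * (aa u i j (t, z) + aa u j i (t, z)) := by
    intro i j z hz
    have e1 : pd j (fun y => u t y i) z = aa u i j (t, z) :=
      pd_slice (diffAt hUopen (hVf i) hz) j
    have e2 : pd i (fun y => u t y j) z = aa u j i (t, z) :=
      pd_slice (diffAt hUopen (hVf j) hz) i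
    have e3 : Mf μ (t, z) = μ t z := rfl
    simp only [symgrad, gradm, Matrix.smul_apply, Matrix.add_apply, Matrix.transpose_apply,
      Matrix.of_apply, smul_eq_mul, e1, e2, e3]
    ring
  have hG2sm : ∀ i j, ContDiffOn ℝ (⊤ : ℕ∞) (fun p => Mf μ p * (aa u i j p + aa u j i p))
      (Set.Ioo 0 T ×ˢ Ω) := fun i j => hMf.mul ((haa i j).add (haa j i))
  have hdivM : ∀ (i : Fin 3) (y : Fin 3 → ℝ), ((t, y) : EE) ∈ Set.Ioo 0 T ×ˢ Ω →
      divM (fun z => (2 * μ t z) • symgrad (u t) z) y i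
        = ∑ j, dd (ee j) (fun p => Mf μ p * (aa u i j p + aa u j i p)) (t, y) := by
    intro i y hy
    unfold divM
    exact Finset.sum_congr rfl fun j _ =>
      pd_slice_on hUopen (hG2sm i j) hy (fun z hz => hS2 i j z hz) j
  have hT2 : div3 (fun y => divM (fun z => (2 * μ t z) • symgrad (u t) z) y) x
      = ∑ i, ∑ j, dd (ee i) (dd (ee j) (fun p => Mf μ p * (aa u i j p + aa u j i p))) (t, x) := by
    unfold div3
    refine Finset.sum_congr rfl fun i _ => ?_
    have hFi : ContDiffOn ℝ (⊤ : ℕ∞)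
        (fun p => ∑ j, dd (ee j) (fun r => Mf μ r * (aa u i j r + aa u j i r)) p)
        (Set.Ioo 0 T ×ˢ Ω) :=
      ContDiffOn.sum fun j _ => contDiffOn_dd hUopen (hG2sm i j) _
    have h1 : pd i (fun y => divM (fun z => (2 * μ t z) • symgrad (u t) z) y i) x
        = dd (ee i) (fun p => ∑ j, dd (ee j) (fun r => Mf μ r * (aa u i j r + aa u j i r)) p)
            (t, x) :=
      pd_slice_on hUopen hFi hqU (fun y hy => hdivM i y hy) i
    rw [h1]
    exact dd_sum Finset.univ
      (fun j _ => diffAt hUopen (contDiffOn_dd hUopen (hG2sm i j) _) hqU) (ee i)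
  have hT2' : ∀ i j : Fin 3,
      dd (ee i) (dd (ee j) (fun p => Mf μ p * (aa u i j p + aa u j i p))) (t, x)
        = dd (ee i) (dd (ee j) (Mf μ)) (t, x) * (aa u i j (t, x) + aa u j i (t, x))
          + dd (ee j) (Mf μ) (t, x) * (dd (ee i) (aa u i j) (t, x) + dd (ee i) (aa u j i) (t, x))
          + dd (ee i) (Mf μ) (t, x) * (dd (ee j) (aa u i j) (t, x) + dd (ee j) (aa u j i) (t, x))
          + Mf μ (t, x) * (dd (ee i) (dd (ee j) (aa u i j)) (t, x)
              + dd (ee i) (dd (ee j) (aa u j i)) (t, x)) := by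
    intro i j
    rw [dd_dd_mul hUopen hMf ((haa i j).add (haa j i)) hqU (ee j) (ee i)]
    rw [dd_add (diffAt hUopen (haa i j) hqU) (diffAt hUopen (haa j i) hqU) (ee i),
      dd_add (diffAt hUopen (haa i j) hqU) (diffAt hUopen (haa j i) hqU) (ee j),
      dd_dd_add hUopen (haa i j) (haa j i) hqU (ee j) (ee i)]
  -- term 3
  have hg3 : ∀ (i : Fin 3) (y : Fin 3 → ℝ), ((t, y) : EE) ∈ Set.Ioo 0 T ×ˢ Ω →
      ((2 : ℝ) • Matrix.mulVec (symgrad (u t) y) (grad3 (μ t) y)) i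
        = ∑ j, (aa u i j (t, y) + aa u j i (t, y)) * dd (ee j) (Mf μ) (t, y) := by
    intro i y hy
    simp only [Pi.smul_apply, smul_eq_mul, Matrix.mulVec, dotProduct, symgrad, gradm,
      Matrix.smul_apply, Matrix.add_apply, Matrix.transpose_apply, Matrix.of_apply, grad3]
    rw [Finset.mul_sum]
    refine Finset.sum_congr rfl fun j _ => ?_
    have e1 : pd j (fun z => u t z i) y = aa u i j (t, y) :=
      pd_slice (diffAt hUopen (hVf i) hy) j
    have e2 : pd i (fun z => u t z j) y = aa u j i (t, y) :=
      pd_slice (diffAt hUopen (hVf j) hy) i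
    have e3 : pd j (μ t) y = dd (ee j) (Mf μ) (t, y) :=
      pd_slice (diffAt hUopen hMf hy) j
    rw [e1, e2, e3]
    ring
  have hG3sm : ∀ i, ContDiffOn ℝ (⊤ : ℕ∞)
      (fun p => ∑ j, (aa u i j p + aa u j i p) * dd (ee j) (Mf μ) p)
      (Set.Ioo 0 T ×ˢ Ω) :=
    fun i => ContDiffOn.sum fun j _ =>
      ((haa i j).add (haa j i)).mul (contDiffOn_dd hUopen hMf (ee j))
  have hT3 : div3 (fun y => (2 : ℝ) • Matrix.mulVec (symgrad (u t) y) (grad3 (μ t) y)) x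
      = ∑ i, ∑ j,
          ((dd (ee i) (aa u i j) (t, x) + dd (ee i) (aa u j i) (t, x))
              * dd (ee j) (Mf μ) (t, x)
            + (aa u i j (t, x) + aa u j i (t, x))
              * dd (ee i) (dd (ee j) (Mf μ)) (t, x)) := by
    unfold div3
    refine Finset.sum_congr rfl fun i _ => ?_
    have h1 : pd i (fun y => ((2 : ℝ) • Matrix.mulVec (symgrad (u t) y) (grad3 (μ t) y)) i) x
        = dd (ee i) (fun p => ∑ j, (aa u i j p + aa u j i p) * dd (ee j) (Mf μ) p) (t, x) :=
      pd_slice_on hUopen (hG3sm i) hqU (fun y hy => hg3 i y hy) i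
    rw [h1, dd_sum Finset.univ (fun j _ =>
      diffAt hUopen (((haa i j).add (haa j i)).mul (contDiffOn_dd hUopen hMf (ee j))) hqU) (ee i)]
    refine Finset.sum_congr rfl fun j _ => ?_
    rw [dd_mul ((diffAt hUopen (haa i j) hqU).fun_add (diffAt hUopen (haa j i) hqU))
      (diffAt hUopen (contDiffOn_dd hUopen hMf (ee j)) hqU) (ee i)]
    rw [dd_add (diffAt hUopen (haa i j) hqU) (diffAt hUopen (haa j i) hqU) (ee i)]
  -- curl components
  have hcv0 : ∀ y : Fin 3 → ℝ, ((t, y) : EE) ∈ Set.Ioo 0 T ×ˢ Ω →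
      curl3 (u t) y 0 = aa u 2 1 (t, y) - aa u 1 2 (t, y) := by
    intro y hy
    have e1 : pd 1 (fun z => u t z 2) y = aa u 2 1 (t, y) :=
      pd_slice (diffAt hUopen (hVf 2) hy) 1
    have e2 : pd 2 (fun z => u t z 1) y = aa u 1 2 (t, y) :=
      pd_slice (diffAt hUopen (hVf 1) hy) 2
    simp only [curl3, Matrix.cons_val_zero]
    rw [e1, e2]
  have hcv1 : ∀ y : Fin 3 → ℝ, ((t, y) : EE) ∈ Set.Ioo 0 T ×ˢ Ω →
      curl3 (u t) y 1 = aa u 0 2 (t, y) - aa u 2 0 (t, y) := by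
    intro y hy
    have e1 : pd 2 (fun z => u t z 0) y = aa u 0 2 (t, y) :=
      pd_slice (diffAt hUopen (hVf 0) hy) 2
    have e2 : pd 0 (fun z => u t z 2) y = aa u 2 0 (t, y) :=
      pd_slice (diffAt hUopen (hVf 2) hy) 0
    simp only [curl3, Matrix.cons_val_one, Matrix.head_cons, Matrix.cons_val_zero]
    rw [e1, e2]
  have hcv2 : ∀ y : Fin 3 → ℝ, ((t, y) : EE) ∈ Set.Ioo 0 T ×ˢ Ω →
      curl3 (u t) y 2 = aa u 1 0 (t, y) - aa u 0 1 (t, y) := by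
    intro y hy
    have e1 : pd 0 (fun z => u t z 1) y = aa u 1 0 (t, y) :=
      pd_slice (diffAt hUopen (hVf 1) hy) 0
    have e2 : pd 1 (fun z => u t z 0) y = aa u 0 1 (t, y) :=
      pd_slice (diffAt hUopen (hVf 0) hy) 1
    simp only [curl3, Matrix.cons_val_two, Matrix.tail_cons, Matrix.head_cons]
    rw [e1, e2]
  -- double curl
  have hcc : ∀ i : Fin 3, curl3 (curl3 (u t)) x i
      = ∑ j, (dd (ee i) (aa u j j) (t, x) - dd (ee j) (aa u i j) (t, x)) := by
    intro i
    have p0 : ∀ k : Fin 3, pd k (fun y => curl3 (u t) y 0) x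
        = dd (ee k) (fun p => aa u 2 1 p - aa u 1 2 p) (t, x) := fun k =>
      pd_slice_on hUopen ((haa 2 1).sub (haa 1 2)) hqU (fun y hy => hcv0 y hy) k
    have p1 : ∀ k : Fin 3, pd k (fun y => curl3 (u t) y 1) x
        = dd (ee k) (fun p => aa u 0 2 p - aa u 2 0 p) (t, x) := fun k =>
      pd_slice_on hUopen ((haa 0 2).sub (haa 2 0)) hqU (fun y hy => hcv1 y hy) k
    have p2 : ∀ k : Fin 3, pd k (fun y => curl3 (u t) y 2) x
        = dd (ee k) (fun p => aa u 1 0 p - aa u 0 1 p) (t, x) := fun k =>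
      pd_slice_on hUopen ((haa 1 0).sub (haa 0 1)) hqU (fun y hy => hcv2 y hy) k
    have dsub : ∀ (i j k l : Fin 3) (m : Fin 3),
        dd (ee m) (fun p => aa u i j p - aa u k l p) (t, x)
          = dd (ee m) (aa u i j) (t, x) - dd (ee m) (aa u k l) (t, x) := fun i j k l m =>
      dd_sub (diffAt hUopen (haa i j) hqU) (diffAt hUopen (haa k l) hqU) (ee m)
    have hcc0 : curl3 (curl3 (u t)) x 0
        = ∑ j, (dd (ee 0) (aa u j j) (t, x) - dd (ee j) (aa u 0 j) (t, x)) := by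
      rw [curl3]
      rw [Matrix.cons_val_zero]
      rw [p2 1, p1 2, dsub, dsub, Fin.sum_univ_three]
      have s1 : dd (ee 1) (aa u 1 0) (t, x) = dd (ee 0) (aa u 1 1) (t, x) :=
        dd_comm hUopen (hVf 1) hqU (ee 0) (ee 1)
      have s2 : dd (ee 2) (aa u 2 0) (t, x) = dd (ee 0) (aa u 2 2) (t, x) :=
        dd_comm hUopen (hVf 2) hqU (ee 0) (ee 2)
      rw [s1, s2]
      ring
    have hcc1 : curl3 (curl3 (u t)) x 1
        = ∑ j, (dd (ee 1) (aa u j j) (t, x) - dd (ee j) (aa u 1 j) (t, x)) := by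
      rw [curl3]
      rw [Matrix.cons_val_one, Matrix.cons_val_zero]
      rw [p0 2, p2 0, dsub, dsub, Fin.sum_univ_three]
      have s1 : dd (ee 2) (aa u 2 1) (t, x) = dd (ee 1) (aa u 2 2) (t, x) :=
        dd_comm hUopen (hVf 2) hqU (ee 1) (ee 2)
      have s2 : dd (ee 0) (aa u 0 1) (t, x) = dd (ee 1) (aa u 0 0) (t, x) :=
        dd_comm hUopen (hVf 0) hqU (ee 1) (ee 0)
      rw [s1, s2]
      ring
    have hcc2 : curl3 (curl3 (u t)) x 2
        = ∑ j, (dd (ee 2) (aa u j j) (t, x) - dd (ee j) (aa u 2 j) (t, x)) := by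
      rw [curl3]
      rw [Matrix.cons_val_two, Matrix.tail_cons, Matrix.head_cons]
      rw [p1 0, p0 1, dsub, dsub, Fin.sum_univ_three]
      have s1 : dd (ee 0) (aa u 0 2) (t, x) = dd (ee 2) (aa u 0 0) (t, x) :=
        dd_comm hUopen (hVf 0) hqU (ee 2) (ee 0)
      have s2 : dd (ee 1) (aa u 1 2) (t, x) = dd (ee 2) (aa u 1 1) (t, x) :=
        dd_comm hUopen (hVf 1) hqU (ee 2) (ee 1)
      rw [s1, s2]
      ring
    fin_cases i
    · exact hcc0
    · exact hcc1
    · exact hcc2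
  -- term 4
  have hgm : ∀ i : Fin 3, grad3 (μ t) x i = dd (ee i) (Mf μ) (t, x) :=
    fun i => pd_slice (diffAt hUopen hMf hqU) i
  have hT4 : (∑ i, curl3 (curl3 (u t)) x i * grad3 (μ t) x i)
      = ∑ i, ∑ j, (dd (ee i) (aa u j j) (t, x) - dd (ee j) (aa u i j) (t, x))
          * dd (ee i) (Mf μ) (t, x) := by
    refine Finset.sum_congr rfl fun i _ => ?_
    rw [hcc i, hgm i, Finset.sum_mul]
  -- RHS
  have hH : ContDiffOn ℝ (⊤ : ℕ∞) (fun p => ∑ j, aa u j j p) (Set.Ioo 0 T ×ˢ Ω) :=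
    ContDiffOn.sum fun j _ => haa j j
  have hgradPhi : ∀ (i : Fin 3) (y : Fin 3 → ℝ), ((t, y) : EE) ∈ Set.Ioo 0 T ×ˢ Ω →
      pd i (fun z => div3 (u t) z) y = dd (ee i) (fun p => ∑ j, aa u j j p) (t, y) :=
    fun i y hy => pd_slice_on hUopen hH hy (fun z hz => hdiv t z hz) i
  have hGRsm : ∀ i : Fin 3, ContDiffOn ℝ (⊤ : ℕ∞)
      (fun p => 2 * Mf μ p / ρ * dd (ee i) (fun r => ∑ j, aa u j j r) p)
      (Set.Ioo 0 T ×ˢ Ω) :=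
    fun i => ((contDiffOn_const.mul hMf).div_const ρ).mul (contDiffOn_dd hUopen hH (ee i))
  have hGR : div3 (fun y => (2 * μ t y / ρ) • grad3 (fun z => div3 (u t) z) y) x
      = ∑ i, dd (ee i) (fun p => 2 * Mf μ p / ρ * dd (ee i) (fun r => ∑ j, aa u j j r) p)
          (t, x) := by
    rw [div3]
    refine Finset.sum_congr rfl fun i _ => ?_
    refine pd_slice_on hUopen (hGRsm i) hqU (fun y hy => ?_) i
    simp only [Pi.smul_apply, smul_eq_mul, grad3]
    rw [hgradPhi i y hy]
    rfl
  have hGR' : ∀ i : Fin 3,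
      dd (ee i) (fun p => 2 * Mf μ p / ρ * dd (ee i) (fun r => ∑ j, aa u j j r) p) (t, x)
        = 2 / ρ * dd (ee i) (Mf μ) (t, x) * (∑ j, dd (ee i) (aa u j j) (t, x))
          + 2 * Mf μ (t, x) / ρ * (∑ j, dd (ee i) (dd (ee i) (aa u j j)) (t, x)) := by
    intro i
    have hA : ContDiffOn ℝ (⊤ : ℕ∞) (fun p => 2 * Mf μ p / ρ) (Set.Ioo 0 T ×ˢ Ω) :=
      (contDiffOn_const.mul hMf).div_const ρ
    rw [dd_mul (diffAt hUopen hA hqU) (diffAt hUopen (contDiffOn_dd hUopen hH (ee i)) hqU)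
      (ee i)]
    have e1 : dd (ee i) (fun p => 2 * Mf μ p / ρ) (t, x)
        = 2 / ρ * dd (ee i) (Mf μ) (t, x) := by
      have h2 : (fun p : EE => 2 * Mf μ p / ρ) = fun p => 2 / ρ * Mf μ p := by
        funext p; ring
      rw [h2, dd_const_mul (diffAt hUopen hMf hqU) (2 / ρ) (ee i)]
    have e2 : dd (ee i) (fun r => ∑ j, aa u j j r) (t, x)
        = ∑ j, dd (ee i) (aa u j j) (t, x) :=
      dd_sum Finset.univ (fun j _ => diffAt hUopen (haa j j) hqU) (ee i)
    have e3 : dd (ee i) (dd (ee i) (fun r => ∑ j, aa u j j r)) (t, x)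
        = ∑ j, dd (ee i) (dd (ee i) (aa u j j)) (t, x) := by
      have h1 : ∀ p ∈ Set.Ioo 0 T ×ˢ Ω,
          dd (ee i) (fun r => ∑ j, aa u j j r) p = ∑ j, dd (ee i) (aa u j j) p :=
        fun p hp => dd_sum Finset.univ (fun j _ => diffAt hUopen (haa j j) hp) (ee i)
      rw [dd_congr_on hUopen h1 hqU (ee i)]
      exact dd_sum Finset.univ
        (fun j _ => diffAt hUopen (contDiffOn_dd hUopen (haa j j) (ee i)) hqU) (ee i)
    rw [e1, e2, e3]
  -- commutation facts
  have hC1 : ∀ i j : Fin 3, dd (ee j) (aa u j i) (t, x) = dd (ee i) (aa u j j) (t, x) :=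
    fun i j => dd_comm hUopen (hVf j) hqU (ee i) (ee j)
  have hC2 : ∀ i j : Fin 3, dd (ee i) (dd (ee j) (aa u j i)) (t, x)
      = dd (ee i) (dd (ee i) (aa u j j)) (t, x) :=
    fun i j => dd_congr_on hUopen
      (fun p hp => dd_comm hUopen (hVf j) hp (ee i) (ee j)) hqU (ee i)
  have hC3 : (∑ i, ∑ j, dd (ee i) (dd (ee j) (aa u i j)) (t, x))
      = ∑ i, ∑ j, dd (ee i) (dd (ee i) (aa u j j)) (t, x) := by
    rw [Finset.sum_comm]
    refine Finset.sum_congr rfl fun i _ => Finset.sum_congr rfl fun j _ => ?_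
    rw [dd_comm hUopen (haa j i) hqU (ee i) (ee j)]
    exact hC2 i j
  -- assemble the residual
  have hT2full : div3 (fun y => divM (fun z => (2 * μ t z) • symgrad (u t) z) y) x
      = ∑ i, ∑ j,
          (dd (ee i) (dd (ee j) (Mf μ)) (t, x) * (aa u i j (t, x) + aa u j i (t, x))
          + dd (ee j) (Mf μ) (t, x) * (dd (ee i) (aa u i j) (t, x) + dd (ee i) (aa u j i) (t, x))
          + dd (ee i) (Mf μ) (t, x) * (dd (ee j) (aa u i j) (t, x) + dd (ee j) (aa u j i) (t, x))
          + Mf μ (t, x) * (dd (ee i) (dd (ee j) (aa u i j)) (t, x)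
              + dd (ee i) (dd (ee j) (aa u j i)) (t, x))) :=
    hT2.trans (Finset.sum_congr rfl fun i _ => Finset.sum_congr rfl fun j _ => hT2' i j)
  have hres' := hres t ht x hx
  rw [hT1, hT2full, hT3, hT4] at hres'
  have hper : ∀ i j : Fin 3,
      (dd (ee i) (dd (ee j) (Mf μ)) (t, x) * (aa u i j (t, x) + aa u j i (t, x))
        + dd (ee j) (Mf μ) (t, x) * (dd (ee i) (aa u i j) (t, x) + dd (ee i) (aa u j i) (t, x))
        + dd (ee i) (Mf μ) (t, x) * (dd (ee j) (aa u i j) (t, x) + dd (ee j) (aa u j i) (t, x))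
        + Mf μ (t, x) * (dd (ee i) (dd (ee j) (aa u i j)) (t, x)
            + dd (ee i) (dd (ee j) (aa u j i)) (t, x)))
      - ((dd (ee i) (aa u i j) (t, x) + dd (ee i) (aa u j i) (t, x)) * dd (ee j) (Mf μ) (t, x)
          + (aa u i j (t, x) + aa u j i (t, x)) * dd (ee i) (dd (ee j) (Mf μ)) (t, x))
      + (dd (ee i) (aa u j j) (t, x) - dd (ee j) (aa u i j) (t, x)) * dd (ee i) (Mf μ) (t, x)
      = 2 * dd (ee i) (Mf μ) (t, x) * dd (ee i) (aa u j j) (t, x)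
        + Mf μ (t, x) * dd (ee i) (dd (ee j) (aa u i j)) (t, x)
        + Mf μ (t, x) * dd (ee i) (dd (ee i) (aa u j j)) (t, x) := by
    intro i j
    rw [hC1 i j, hC2 i j]
    ring
  have hsum : ∑ i, ∑ j,
      (2 * dd (ee i) (Mf μ) (t, x) * dd (ee i) (aa u j j) (t, x)
        + Mf μ (t, x) * dd (ee i) (dd (ee j) (aa u i j)) (t, x)
        + Mf μ (t, x) * dd (ee i) (dd (ee i) (aa u j j)) (t, x))
      = ρ * ∑ i, dd tau (aa u i i) (t, x) := by
    have h1 : ∑ i, ∑ j,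
        (2 * dd (ee i) (Mf μ) (t, x) * dd (ee i) (aa u j j) (t, x)
          + Mf μ (t, x) * dd (ee i) (dd (ee j) (aa u i j)) (t, x)
          + Mf μ (t, x) * dd (ee i) (dd (ee i) (aa u j j)) (t, x))
        = (∑ i, ∑ j,
          (dd (ee i) (dd (ee j) (Mf μ)) (t, x) * (aa u i j (t, x) + aa u j i (t, x))
          + dd (ee j) (Mf μ) (t, x) * (dd (ee i) (aa u i j) (t, x) + dd (ee i) (aa u j i) (t, x))
          + dd (ee i) (Mf μ) (t, x) * (dd (ee j) (aa u i j) (t, x) + dd (ee j) (aa u j i) (t, x))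
          + Mf μ (t, x) * (dd (ee i) (dd (ee j) (aa u i j)) (t, x)
              + dd (ee i) (dd (ee j) (aa u j i)) (t, x))))
          - (∑ i, ∑ j,
            ((dd (ee i) (aa u i j) (t, x) + dd (ee i) (aa u j i) (t, x)) * dd (ee j) (Mf μ) (t, x)
              + (aa u i j (t, x) + aa u j i (t, x)) * dd (ee i) (dd (ee j) (Mf μ)) (t, x)))
          + ∑ i, ∑ j, (dd (ee i) (aa u j j) (t, x) - dd (ee j) (aa u i j) (t, x))
              * dd (ee i) (Mf μ) (t, x) := by
      rw [← Finset.sum_sub_distrib, ← Finset.sum_add_distrib]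
      refine Finset.sum_congr rfl fun i _ => ?_
      rw [← Finset.sum_sub_distrib, ← Finset.sum_add_distrib]
      exact Finset.sum_congr rfl fun j _ => (hper i j).symm
    rw [h1]
    linarith [hres']
  -- split the key sum
  have hMsplit : ∑ i, ∑ j, Mf μ (t, x) * dd (ee i) (dd (ee j) (aa u i j)) (t, x)
      = ∑ i, ∑ j, Mf μ (t, x) * dd (ee i) (dd (ee i) (aa u j j)) (t, x) := by
    simp only [← Finset.mul_sum]
    rw [hC3]
  have hfin : ∑ i, ∑ j,
      (2 * dd (ee i) (Mf μ) (t, x) * dd (ee i) (aa u j j) (t, x)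
        + 2 * Mf μ (t, x) * dd (ee i) (dd (ee i) (aa u j j)) (t, x))
      = ρ * ∑ i, dd tau (aa u i i) (t, x) := by
    have e1 : ∀ i j : Fin 3,
        2 * dd (ee i) (Mf μ) (t, x) * dd (ee i) (aa u j j) (t, x)
          + 2 * Mf μ (t, x) * dd (ee i) (dd (ee i) (aa u j j)) (t, x)
        = (2 * dd (ee i) (Mf μ) (t, x) * dd (ee i) (aa u j j) (t, x)
            + Mf μ (t, x) * dd (ee i) (dd (ee j) (aa u i j)) (t, x)
            + Mf μ (t, x) * dd (ee i) (dd (ee i) (aa u j j)) (t, x))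
          + (Mf μ (t, x) * dd (ee i) (dd (ee i) (aa u j j)) (t, x)
            - Mf μ (t, x) * dd (ee i) (dd (ee j) (aa u i j)) (t, x)) := by
      intro i j; ring
    calc ∑ i, ∑ j,
        (2 * dd (ee i) (Mf μ) (t, x) * dd (ee i) (aa u j j) (t, x)
          + 2 * Mf μ (t, x) * dd (ee i) (dd (ee i) (aa u j j)) (t, x))
        = (∑ i, ∑ j,
            (2 * dd (ee i) (Mf μ) (t, x) * dd (ee i) (aa u j j) (t, x)
              + Mf μ (t, x) * dd (ee i) (dd (ee j) (aa u i j)) (t, x)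
              + Mf μ (t, x) * dd (ee i) (dd (ee i) (aa u j j)) (t, x)))
            + ((∑ i, ∑ j, Mf μ (t, x) * dd (ee i) (dd (ee i) (aa u j j)) (t, x))
              - ∑ i, ∑ j, Mf μ (t, x) * dd (ee i) (dd (ee j) (aa u i j)) (t, x)) := by
          rw [← Finset.sum_sub_distrib, ← Finset.sum_add_distrib]
          refine Finset.sum_congr rfl fun i _ => ?_
          rw [← Finset.sum_sub_distrib, ← Finset.sum_add_distrib]
          exact Finset.sum_congr rfl fun j _ => e1 i j
      _ = ρ * ∑ i, dd tau (aa u i i) (t, x) := by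
          rw [hsum, hMsplit]
          ring
  -- finish
  have hρ0 : ρ ≠ 0 := ne_of_gt hρ
  rw [hGL, hGR]
  calc ∑ i, dd tau (aa u i i) (t, x)
      = (1 / ρ) * (ρ * ∑ i, dd tau (aa u i i) (t, x)) := by field_simp
    _ = (1 / ρ) * ∑ i, ∑ j,
        (2 * dd (ee i) (Mf μ) (t, x) * dd (ee i) (aa u j j) (t, x)
          + 2 * Mf μ (t, x) * dd (ee i) (dd (ee i) (aa u j j)) (t, x)) := by rw [hfin]
    _ = ∑ i, (2 / ρ * dd (ee i) (Mf μ) (t, x) * (∑ j, dd (ee i) (aa u j j) (t, x))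
          + 2 * Mf μ (t, x) / ρ * (∑ j, dd (ee i) (dd (ee i) (aa u j j)) (t, x))) := by
        rw [Finset.mul_sum]
        refine Finset.sum_congr rfl fun i _ => ?_
        rw [Finset.mul_sum, Finset.mul_sum, Finset.mul_sum, ← Finset.sum_add_distrib]
        refine Finset.sum_congr rfl fun j _ => ?_
        field_simp
    _ = ∑ i, dd (ee i)
          (fun p => 2 * Mf μ p / ρ * dd (ee i) (fun r => ∑ j, aa u j j r) p) (t, x) :=
        Finset.sum_congr rfl fun i _ => (hGR' i).symm
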